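/- Let F₂ be the free group on two generators u and v, and let φ : F₂ → ℤ be the homomorphism sending u to 0 and v to 1. Then the kernel of φ is a free group, freely generated by the elements w_k = v^k u v^{-k} for k ∈ ℤ. -/

import Mathlib

/-- The free group on two generators `u`, `v`. -/
def u : FreeGroup (Fin 2) := FreeGroup.of 0
def v : FreeGroup (Fin 2) := FreeGroup.of 1

/-- The homomorphism `F₂ → ℤ` sending `u ↦ 0` and `v ↦ 1`. -/
def φ : FreeGroup (Fin 2) →* Multiplicative ℤ :=
  FreeGroup.lift fun i : Fin 2 =>
    if i = 0 then Multiplicative.ofAdd (0 : ℤ) else Multiplicative.ofAdd (1 : ℤ)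

/-!
Let `ℤ` act on `FreeGroup ℤ` by shifting indices, and let `wHom : FreeGroup ℤ →* F₂` send `x_k`
to `w_k`. The homomorphism `toSemidirect : F₂ →* FreeGroup ℤ ⋊ ℤ`, `u ↦ (x₀, 0)`, `v ↦ (1, 1)`,
turns `φ` into the projection onto `ℤ`, sends `w_k` to `x_k`, and has the left inverse
`(x, n) ↦ wHom x * vⁿ`. Hence `wHom` is injective with image `ker φ`.
-/

open SemidirectProduct

lemma FreeGroupBasis.existsUnique_hom_apply {ι G H : Type*} [Group G] [Group H]
    (b : FreeGroupBasis ι G) (g : ι → H) : ∃! ψ : G →* H, ∀ i, ψ (b i) = g i := by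
  refine ⟨b.lift g, fun i => ?_, fun ψ hψ => b.ext_hom _ _ fun i => ?_⟩
  · simp
  · simp [hψ]

def shift : Multiplicative ℤ →* MulAut (FreeGroup ℤ) :=
  MonoidHom.mk' (fun n => FreeGroup.freeGroupCongr (Equiv.addLeft n.toAdd)) fun m n =>
    MulEquiv.toMonoidHom_injective <| FreeGroup.ext_hom _ _ fun k => by simp [add_assoc]

@[simp] lemma shift_of (n : Multiplicative ℤ) (k : ℤ) :
    shift n (FreeGroup.of k) = FreeGroup.of (n.toAdd + k) := by
  simp [shift]

def w (k : ℤ) : FreeGroup (Fin 2) := v ^ k * u * v ^ (-k)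

def wHom : FreeGroup ℤ →* FreeGroup (Fin 2) := FreeGroup.lift w

@[simp] lemma wHom_of (k : ℤ) : wHom (FreeGroup.of k) = w k := FreeGroup.lift_apply_of

lemma wHom_comp_shift (n : Multiplicative ℤ) :
    wHom.comp (shift n).toMonoidHom =
      (MulAut.conj (zpowersHom _ v n)).toMonoidHom.comp wHom :=
  FreeGroup.ext_hom _ _ fun k => by
    simp only [MonoidHom.comp_apply, MulEquiv.coe_toMonoidHom, shift_of, wHom_of, w,
      MulAut.conj_apply, zpowersHom_apply, zpow_add]
    group

def toSemidirect : FreeGroup (Fin 2) →* FreeGroup ℤ ⋊[shift] Multiplicative ℤ :=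
  FreeGroup.lift ![inl (FreeGroup.of 0), inr (Multiplicative.ofAdd 1)]

@[simp] lemma toSemidirect_u : toSemidirect u = inl (FreeGroup.of 0) := FreeGroup.lift_apply_of

@[simp] lemma toSemidirect_v : toSemidirect v = inr (Multiplicative.ofAdd 1) :=
  FreeGroup.lift_apply_of

lemma toSemidirect_v_zpow (k : ℤ) : toSemidirect (v ^ k) = inr (Multiplicative.ofAdd k) := by
  rw [map_zpow, toSemidirect_v, ← map_zpow, ← ofAdd_zsmul, smul_eq_mul, mul_one]

def ofSemidirect : FreeGroup ℤ ⋊[shift] Multiplicative ℤ →* FreeGroup (Fin 2) :=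
  SemidirectProduct.lift wHom (zpowersHom _ v) wHom_comp_shift

lemma ofSemidirect_comp_toSemidirect : ofSemidirect.comp toSemidirect = MonoidHom.id _ :=
  FreeGroup.ext_hom _ _ fun i => by
    fin_cases i <;> simp [toSemidirect, ofSemidirect, w, u, v]

lemma rightHom_comp_toSemidirect : rightHom.comp toSemidirect = φ :=
  FreeGroup.ext_hom _ _ fun i => by
    fin_cases i <;> simp [toSemidirect, φ]

lemma toSemidirect_comp_wHom : toSemidirect.comp wHom = inl :=
  FreeGroup.ext_hom _ _ fun k => by
    have h := inl_aut (φ := shift) (Multiplicative.ofAdd k) (FreeGroup.of 0)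
    rw [shift_of, toAdd_ofAdd, add_zero] at h
    rw [MonoidHom.comp_apply, wHom_of, w, map_mul, map_mul, toSemidirect_u, zpow_neg, map_inv,
      toSemidirect_v_zpow, h, map_inv]

lemma wHom_injective : Function.Injective wHom := by
  intro x y h
  simpa [← MonoidHom.comp_apply toSemidirect, toSemidirect_comp_wHom] using congrArg toSemidirect h

lemma ofSemidirect_inl_mul_inr (n : FreeGroup ℤ) (g : Multiplicative ℤ) :
    ofSemidirect (inl n * inr g) = wHom n * v ^ g.toAdd := by
  simp [ofSemidirect]

lemma range_wHom : wHom.range = φ.ker := by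
  apply le_antisymm
  · rw [MonoidHom.range_le_ker_iff]
    refine FreeGroup.ext_hom _ _ fun k => ?_
    simp [w, φ, u, v]
  · intro x hx
    have hright : (toSemidirect x).right = 1 := by
      rw [← rightHom_eq_right, ← MonoidHom.comp_apply, rightHom_comp_toSemidirect]; exact hx
    refine ⟨(toSemidirect x).left, ?_⟩
    calc wHom (toSemidirect x).left
        = ofSemidirect (inl (toSemidirect x).left * inr (toSemidirect x).right) := by
          rw [ofSemidirect_inl_mul_inr, hright, toAdd_one, zpow_zero, mul_one]
      _ = x := by
          rw [inl_left_mul_inr_right, ← MonoidHom.comp_apply, ofSemidirect_comp_toSemidirect,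
            MonoidHom.id_apply]

noncomputable def kerBasis : FreeGroupBasis ℤ φ.ker :=
  .ofRepr ((MonoidHom.ofInjective wHom_injective).trans (MulEquiv.subgroupCongr range_wHom)).symm

lemma w_mem_ker (k : ℤ) : w k ∈ φ.ker :=
  range_wHom ▸ ⟨FreeGroup.of k, wHom_of k⟩

lemma kerBasis_apply (k : ℤ) : kerBasis k = ⟨w k, w_mem_ker k⟩ :=
  Subtype.ext (wHom_of k)

/-- The kernel of `φ` is freely generated by the elements `w_k = vᵏ u v⁻ᵏ`, `k ∈ ℤ`:
they lie in the kernel, and the kernel has the universal property of the free group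
on this `ℤ`-indexed family. -/
theorem stmt4 :
    ∃ hw : ∀ k : ℤ, v ^ k * u * v ^ (-k) ∈ φ.ker,
      ∀ (H : Type) [Group H] (g : ℤ → H),
        ∃! ψ : φ.ker →* H, ∀ k : ℤ, ψ ⟨v ^ k * u * v ^ (-k), hw k⟩ = g k := by
  refine ⟨w_mem_ker, fun H _ g => ?_⟩
  have h := kerBasis.existsUnique_hom_apply g
  simp only [kerBasis_apply] at h
  exact h
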